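/- Let X be a Tychonoff (completely regular T1) space such that the co-diagonal Δ^c_X = (X × X) \ Δ_X is discretely σ-compact, i.e. the closure in Δ^c_X of every discrete subset of Δ^c_X is σ-compact. Then X × X is hereditarily Lindelöf. -/

import Mathlib

open Set Topology Cardinal

universe u

/-- The co-diagonal of `X`: the complement of the diagonal in `X × X`. -/
def codiag (X : Type u) [TopologicalSpace X] : Set (X × X) := {p | p.1 ≠ p.2}

/-- A space is discretely σ-compact if the closure of every discrete subset is
σ-compact. -/
def DiscretelySigmaCompact (Z : Type u) [TopologicalSpace Z] : Prop :=
  ∀ D : Set Z, DiscreteTopology D → IsSigmaCompact (closure D)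

/-!
A non-Lindelöf space contains a right-separated ω₁-sequence, and the isolated points of its range
form a discrete set that is dense in it. So a set is Lindelöf as soon as the closures of its
discrete subsets are hereditarily Lindelöf, and closures of discrete sets are what the hypothesis
on `codiag X` controls.

If `D ⊆ X` is discrete then so is the off-diagonal part of `D × D`, whose closure in `codiag X` is
the off-diagonal part of `closure D × closure D`. Hence a compact `closure D` has a Gδ diagonal and
is metrizable (Šneider), so compact subsets of `X` are hereditarily Lindelöf and first countable.
For compact `T ⊆ X`, a transfinite construction of length ω₁ then shows that `(T × T) ∩ codiag X`
is σ-compact, so `T` is metrizable as well. Every compact subset of `codiag X` lies in such a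
`T × T`, hence `codiag X` is hereditarily Lindelöf. Finally, `X` minus a point embeds in `codiag X`
as a horizontal slice, and `X × X` is `codiag X` together with a copy of `X`.
-/

open Filter
open scoped Ordinal

section General

variable {Y : Type*} [TopologicalSpace Y]

theorem IsDiscrete.prod {Y' : Type*} [TopologicalSpace Y'] {s : Set Y} {t : Set Y'}
    (hs : IsDiscrete s) (ht : IsDiscrete t) : IsDiscrete (s ×ˢ t) :=
  isDiscrete_iff_nhdsWithin.2 fun p hp => by
    rw [← Prod.mk.eta (p := p), nhdsWithin_prod_eq, hs.nhdsWithin _ hp.1, ht.nhdsWithin _ hp.2,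
      prod_pure_pure]

theorem isDiscrete_image_of_separated {ι : Type*} [LinearOrder ι] {z : ι → Y} {s : Set ι}
    (hleft : ∀ i ∈ s, z i ∉ closure (z '' Iio i))
    (hright : ∀ i ∈ s, ∃ U, IsOpen U ∧ z i ∈ U ∧ ∀ j ∈ s, i < j → z j ∉ U) :
    IsDiscrete (z '' s) := by
  rw [isDiscrete_iff_forall_mem_exists_isOpen]
  rintro _ ⟨i, hi, rfl⟩
  obtain ⟨U, hUo, hiU, hU⟩ := hright i hi
  have hzi : z i ∈ U ∩ (closure (z '' Iio i))ᶜ ∩ z '' s := ⟨⟨hiU, hleft i hi⟩, i, hi, rfl⟩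
  refine ⟨U ∩ (closure (z '' Iio i))ᶜ, hUo.inter isClosed_closure.isOpen_compl,
    subset_antisymm ?_ (singleton_subset_iff.2 hzi)⟩
  rintro _ ⟨⟨hjU, hjcl⟩, j, hj, rfl⟩
  rcases lt_trichotomy j i with h | rfl | h
  · exact absurd (subset_closure (mem_image_of_mem z (mem_Iio.2 h))) hjcl
  · rfl
  · exact absurd hjU (hU j hj h)

theorem isCountablyGenerated_nhdsSet_of_iInter_subset [CompactSpace Y] {K : Set Y}
    {F : ℕ → Set Y} (hF : ∀ n, IsClosed (F n)) (hFK : ∀ n, F n ∈ 𝓝ˢ K) (hK : ⋂ n, F n ⊆ K) :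
    (𝓝ˢ K).IsCountablyGenerated := by
  refine HasBasis.isCountablyGenerated (p := fun _ : Finset ℕ => True)
    (s := fun s => ⋂ n ∈ s, F n) ⟨fun t => ⟨fun ht => ?_, fun ⟨s, _, hst⟩ => ?_⟩⟩
  · obtain ⟨s, hs⟩ := exists_subset_nhds_of_isCompact' (V := fun s : Finset ℕ => ⋂ n ∈ s, F n)
      (Antitone.directed_ge fun s s' hss' => biInter_subset_biInter_left hss')
      (fun s => (isClosed_biInter fun n _ => hF n).isCompact)
      (fun s => isClosed_biInter fun n _ => hF n)
      fun x hx => mem_nhdsSet_iff_forall.1 ht x <| hK <| mem_iInter.2 fun n => by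
        simpa using mem_iInter.1 hx {n}
    exact ⟨s, trivial, hs⟩
  · exact mem_of_superset ((biInter_finset_mem s).2 fun n _ => hFK n) hst

theorem IsClosed.isCountablyGenerated_nhdsSet [CompactSpace Y] [T2Space Y] {K : Set Y}
    (hK : IsClosed K) (hKδ : IsGδ K) : (𝓝ˢ K).IsCountablyGenerated := by
  obtain ⟨W, hWo, rfl⟩ := isGδ_iff_eq_iInter_nat.1 hKδ
  choose V hVo hKV hVW using fun n => normal_exists_closure_subset hK (hWo n) (iInter_subset _ n)
  exact isCountablyGenerated_nhdsSet_of_iInter_subset (fun n => isClosed_closure)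
    (fun n => mem_of_superset ((hVo n).mem_nhdsSet.2 (hKV n)) subset_closure)
    (iInter_mono hVW)

/-- Šneider's theorem: the neighbourhoods of the diagonal are the entourages of the unique
uniformity, which is then countably generated, hence metrizable. -/
theorem secondCountableTopology_of_isGδ_diagonal [CompactSpace Y] [T2Space Y]
    (h : IsGδ (diagonal Y)) : SecondCountableTopology Y := by
  let := uniformSpaceOfCompactR1 (γ := Y)
  have : (uniformity Y).IsCountablyGenerated := isClosed_diagonal.isCountablyGenerated_nhdsSet h
  infer_instance

theorem firstCountableTopology_of_hereditarilyLindelofSpace [CompactSpace Y] [T2Space Y]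
    [HereditarilyLindelofSpace Y] : FirstCountableTopology Y := by
  refine ⟨fun x => ?_⟩
  let ι := {s : Set Y // s ∈ 𝓝 x ∧ IsClosed s}
  have : Nonempty ι := ⟨⟨univ, univ_mem, isClosed_univ⟩⟩
  obtain ⟨k, hk⟩ := eq_closed_inter_nat (fun s : ι => s.1) fun s => s.2.2
  rw [← nhdsSet_singleton]
  refine isCountablyGenerated_nhdsSet_of_iInter_subset (fun n => (k n).2.2)
    (fun n => by rw [nhdsSet_singleton]; exact (k n).2.1) ?_
  rw [hk]
  intro y hy
  by_contra hyx
  obtain ⟨s, ⟨hsx, hsc⟩, hsy⟩ :=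
    (closed_nhds_basis x).mem_iff.1 (compl_singleton_mem_nhds (Ne.symm hyx))
  exact hsy (mem_iInter.1 hy ⟨s, hsx, hsc⟩) rfl

theorem isHereditarilyLindelof_iff_hereditarilyLindelofSpace {s : Set Y} :
    IsHereditarilyLindelof s ↔ HereditarilyLindelofSpace s := by
  refine ⟨fun hs => ⟨fun t _ => ?_⟩, fun _ t hts => ?_⟩
  · exact Subtype.isLindelof_iff.2 (hs _ (Subtype.coe_image_subset s t))
  · rw [← inter_eq_right.2 hts, ← Subtype.image_preimage_coe]
    exact Subtype.isLindelof_iff.1 (HereditarilyLindelofSpace.isLindelof _)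

theorem exists_countable_subset_mem_closure {P : Set Y} [FirstCountableTopology P] {s : Set Y}
    (hsP : s ⊆ P) {q : Y} (hq : q ∈ closure s ∩ P) : ∃ t ⊆ s, t.Countable ∧ q ∈ closure t := by
  have : (⟨q, hq.2⟩ : P) ∈ closure ((↑) ⁻¹' s) := by
    rw [closure_subtype, Subtype.image_preimage_coe, inter_eq_right.2 hsP]
    exact hq.1
  obtain ⟨x, hxs, hx⟩ := mem_closure_iff_seq_limit.1 this
  refine ⟨range fun n => (x n : Y), range_subset_iff.2 hxs, countable_range _, ?_⟩
  exact mem_closure_of_tendsto (continuous_subtype_val.tendsto _ |>.comp hx)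
    (Eventually.of_forall fun n => mem_range_self n)

theorem IsSigmaCompact.union {s t : Set Y} (hs : IsSigmaCompact s) (ht : IsSigmaCompact t) :
    IsSigmaCompact (s ∪ t) := by
  rw [union_eq_iUnion]
  exact isSigmaCompact_iUnion _ fun b => by cases b <;> assumption

theorem IsSigmaCompact.isGδ_compl [T2Space Y] {s : Set Y} (hs : IsSigmaCompact s) :
    IsGδ sᶜ := by
  obtain ⟨K, hK, rfl⟩ := hs
  rw [compl_iUnion]
  exact .iInter_of_isOpen fun n => (hK n).isClosed.isOpen_compl

theorem IsSigmaCompact.exists_isSigmaCompact_nhdsWithin [T2Space Y] {F O A : Set Y}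
    (hF : IsCompact F) (hO : IsOpen O) (hA : IsSigmaCompact A) (hAFO : A ⊆ F ∩ O) :
    ∃ M ⊆ F ∩ O, IsSigmaCompact M ∧ ∀ q ∈ A, M ∈ 𝓝[F ∩ O] q := by
  obtain ⟨K, hK, rfl⟩ := hA
  have hsep (n : ℕ) : ∃ U, IsOpen U ∧ K n ⊆ U ∧ closure U ∩ F ⊆ O := by
    obtain ⟨U, V, hUo, hVo, hKU, hFV, hUV⟩ := SeparatedNhds.of_isCompact_isCompact (hK n)
      (hF.diff hO) (disjoint_left.2 fun y hy hy' => hy'.2 (hAFO (mem_iUnion_of_mem n hy)).2)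
    refine ⟨U, hUo, hKU, fun y ⟨hyU, hyF⟩ => by_contra fun hyO => ?_⟩
    exact disjoint_left.1 (hUV.closure_left hVo) hyU (hFV ⟨hyF, hyO⟩)
  choose U hUo hKU hUO using hsep
  refine ⟨⋃ n, closure (U n) ∩ F, iUnion_subset fun n y hy => ⟨hy.2, hUO n hy⟩,
    isSigmaCompact_iUnion_of_isCompact _ fun n => hF.inter_left isClosed_closure, ?_⟩
  intro q hq
  obtain ⟨n, hn⟩ := mem_iUnion.1 hq
  exact mem_nhdsWithin.2 ⟨U n, hUo n, hKU n hn,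
    fun y ⟨hyU, hyF, _⟩ => mem_iUnion.2 ⟨n, subset_closure hyU, hyF⟩⟩

theorem IsSigmaCompact.countable_preimage_of_forall_nhdsWithin {ι : Type*} {f : ι → Y}
    {A : Set Y} (hA : IsSigmaCompact A) (h : ∀ q ∈ A, ∃ N ∈ 𝓝[A] q, (f ⁻¹' N).Countable) :
    (f ⁻¹' A).Countable := by
  obtain ⟨K, hK, rfl⟩ := hA
  rw [preimage_iUnion]
  refine countable_iUnion fun n => (hK n).induction_on (p := fun s => (f ⁻¹' s).Countable)
    countable_empty (fun s t hst ht => ht.mono (preimage_mono hst))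
    (fun s t hs ht => by simpa only [preimage_union] using hs.union ht) fun q hq => ?_
  obtain ⟨N, hN, hNc⟩ := h q (mem_iUnion_of_mem n hq)
  exact ⟨N, nhdsWithin_mono q (subset_iUnion K n) hN, hNc⟩

end General

section OmegaOne

theorem countable_Iio_omega_one (i : (ω₁ : Ordinal.{0}).ToType) : (Iio i).Countable := by
  have := Cardinal.mk_Iio_lt i (by simp)
  rw [← Cardinal.le_aleph0_iff_set_countable, ← Cardinal.lt_aleph_one_iff]
  simpa using this

theorem countable_Iic_omega_one (i : (ω₁ : Ordinal.{0}).ToType) : (Iic i).Countable := by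
  rw [← Iio_insert]
  exact (countable_Iio_omega_one i).insert i

theorem not_countable_univ_omega_one : ¬ (univ : Set (ω₁ : Ordinal.{0}).ToType).Countable := by
  rw [← Cardinal.le_aleph0_iff_set_countable]
  simp

theorem exists_gt_of_countable_omega_one {s : Set (ω₁ : Ordinal.{0}).ToType} (hs : s.Countable) :
    ∃ j, ∀ i ∈ s, i < j := by
  by_contra! h
  exact not_countable_univ_omega_one <| (hs.biUnion fun i _ => countable_Iic_omega_one i).mono
    fun j _ => let ⟨i, hi, hji⟩ := h j; mem_biUnion hi hji

end OmegaOne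

theorem WellFoundedLT.exists_forall_of_forall_exists {ι β : Type*} [Preorder ι] [WellFoundedLT ι]
    [Nonempty β] (P : ι → (ι → β) → β → Prop) (hP : ∀ i z, ∃ b, P i z b)
    (hloc : ∀ i z z' b, EqOn z z' (Iio i) → P i z b → P i z' b) :
    ∃ z : ι → β, ∀ i, P i z (z i) := by
  classical
  let F : ∀ i, (∀ j, j < i → β) → β := fun i g =>
    (hP i fun j => if h : j < i then g j h else Classical.arbitrary β).choose
  refine ⟨wellFounded_lt.fix F, fun i => ?_⟩
  rw [wellFounded_lt.fix_eq F i]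
  exact hloc i _ _ _ (fun j hj => dif_pos hj) (Exists.choose_spec _)

section RightSeparated

variable {Y : Type*} [TopologicalSpace Y]

/-- The initial segments of `p` are relatively open in its range. -/
def IsRightSeparated {ι : Type*} [LT ι] (p : ι → Y) : Prop :=
  ∃ U : ι → Set Y, ∀ i, IsOpen (U i) ∧ p i ∈ U i ∧ ∀ j, i < j → p j ∉ U i

theorem exists_isRightSeparated_of_not_isLindelof {t : Set Y} (ht : ¬ IsLindelof t) :
    ∃ p : (ω₁ : Ordinal.{0}).ToType → Y, IsRightSeparated p ∧ range p ⊆ t := by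
  obtain ⟨κ, U, hUo, htU, hU⟩ : ∃ (κ : Type _) (U : κ → Set Y), (∀ i, IsOpen (U i)) ∧
      t ⊆ ⋃ i, U i ∧ ∀ r : Set κ, r.Countable → ¬ t ⊆ ⋃ i ∈ r, U i := by
    by_contra! H
    exact ht (isLindelof_of_countable_subcover fun U hUo htU => H _ U hUo htU)
  obtain ⟨y₀, hy₀⟩ : t.Nonempty :=
    nonempty_iff_ne_empty.2 (by rintro rfl; exact ht isLindelof_empty)
  have : Nonempty Y := ⟨y₀⟩
  obtain ⟨i₀, -⟩ := mem_iUnion.1 (htU hy₀)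
  have hidx (y : Y) : ∃ i, y ∈ t → y ∈ U i := by
    by_cases hy : y ∈ t
    · exact (mem_iUnion.1 (htU hy)).imp fun _ hi _ => hi
    · exact ⟨i₀, fun h => absurd h hy⟩
  choose idx hidx using hidx
  obtain ⟨p, hp⟩ := WellFoundedLT.exists_forall_of_forall_exists (ι := (ω₁ : Ordinal.{0}).ToType)
    (fun ξ z y => y ∈ t ∧ ∀ η < ξ, y ∉ U (idx (z η)))
    (fun ξ z => by
      obtain ⟨y, hyt, hy⟩ := not_subset.1 (hU _ ((countable_Iio_omega_one ξ).image (idx ∘ z)))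
      exact ⟨y, hyt, fun η hη hyU => hy (mem_biUnion (mem_image_of_mem _ hη) hyU)⟩)
    (fun ξ z z' y h hy => ⟨hy.1, fun η hη => h hη ▸ hy.2 η hη⟩)
  exact ⟨p, ⟨fun ξ => U (idx (p ξ)), fun ξ => ⟨hUo _, hidx _ (hp ξ).1, fun ζ h => (hp ζ).2 ξ h⟩⟩,
    range_subset_iff.2 fun ξ => (hp ξ).1⟩

theorem IsRightSeparated.not_isLindelof_range {p : (ω₁ : Ordinal.{0}).ToType → Y}
    (hp : IsRightSeparated p) : ¬ IsLindelof (range p) := by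
  obtain ⟨U, hU⟩ := hp
  intro hL
  obtain ⟨r, hr, hcov⟩ := hL.elim_countable_subcover U (fun i => (hU i).1)
    (range_subset_iff.2 fun i => mem_iUnion.2 ⟨i, (hU i).2.1⟩)
  obtain ⟨j, hj⟩ := exists_gt_of_countable_omega_one hr
  obtain ⟨η, hη, hpj⟩ := mem_iUnion₂.1 (hcov (mem_range_self j))
  exact (hU η).2.2 j (hj η hη) hpj

theorem IsRightSeparated.exists_isDiscrete_subset_closure {ι : Type*} [LinearOrder ι]
    [WellFoundedLT ι] {p : ι → Y} (hp : IsRightSeparated p) :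
    ∃ D ⊆ range p, IsDiscrete D ∧ range p ⊆ closure D := by
  obtain ⟨U, hU⟩ := hp
  set D := {y ∈ range p | ∃ V, IsOpen V ∧ V ∩ range p = {y}}
  refine ⟨D, sep_subset _ _, isDiscrete_iff_forall_mem_exists_isOpen.2 ?_, ?_⟩
  · rintro y ⟨hy, V, hVo, hV⟩
    refine ⟨V, hVo, subset_antisymm (fun x hx => hV ▸ ⟨hx.1, hx.2.1⟩) ?_⟩
    rw [singleton_subset_iff]
    exact ⟨(hV.symm ▸ mem_singleton y : y ∈ V ∩ range p).1, hy, V, hVo, hV⟩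
  · rintro _ ⟨ξ, rfl⟩
    refine mem_closure_iff.2 fun N hNo hξN => ?_
    obtain ⟨η, hηN, hmin⟩ := wellFounded_lt.has_min {ζ | p ζ ∈ N} ⟨ξ, hξN⟩
    have hV : (N ∩ U η) ∩ range p = {p η} := by
      refine subset_antisymm ?_ (singleton_subset_iff.2 ⟨⟨hηN, (hU η).2.1⟩, η, rfl⟩)
      rintro _ ⟨⟨hζN, hζU⟩, ζ, rfl⟩
      rcases lt_trichotomy ζ η with h | rfl | h
      · exact absurd h (hmin ζ hζN)
      · rfl
      · exact absurd hζU ((hU η).2.2 ζ h)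
    exact ⟨p η, hηN, ⟨η, rfl⟩, N ∩ U η, hNo.inter (hU η).1, hV⟩

theorem isLindelof_of_forall_isDiscrete {t : Set Y}
    (h : ∀ D ⊆ t, IsDiscrete D → IsHereditarilyLindelof (closure D ∩ t)) : IsLindelof t := by
  by_contra ht
  obtain ⟨p, hp, hpt⟩ := exists_isRightSeparated_of_not_isLindelof ht
  obtain ⟨D, hDp, hD, hpD⟩ := hp.exists_isDiscrete_subset_closure
  exact hp.not_isLindelof_range (h D (hDp.trans hpt) hD _ (subset_inter hpD hpt))

end RightSeparated

section SigmaCompactness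

variable {Y : Type*} [TopologicalSpace Y]

theorem exists_avoiding_seq_of_not_isSigmaCompact {Z : Set Y} (hZ : ¬ IsSigmaCompact Z)
    {M : Set Y → Set Y} (hMZ : ∀ E, M E ⊆ Z) (hMσ : ∀ E, IsSigmaCompact (M E)) :
    ∃ z : (ω₁ : Ordinal.{0}).ToType → Y,
      ∀ ξ, z ξ ∈ Z ∧ z ξ ∉ M (z '' Iio ξ) ∧ ∀ η < ξ, z ξ ∉ M (z '' Iic η) := by
  obtain ⟨y₀, -⟩ : Z.Nonempty :=
    nonempty_iff_ne_empty.2 (by rintro rfl; exact hZ isSigmaCompact_empty)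
  have : Nonempty Y := ⟨y₀⟩
  refine WellFoundedLT.exists_forall_of_forall_exists
    (fun ξ z y => y ∈ Z ∧ y ∉ M (z '' Iio ξ) ∧ ∀ η < ξ, y ∉ M (z '' Iic η)) (fun ξ z => ?_)
    fun ξ z z' y h hy => ⟨hy.1, h.image_eq ▸ hy.2.1,
      fun η hη => (h.mono (Iic_subset_Iio.2 hη)).image_eq ▸ hy.2.2 η hη⟩
  have hσ : IsSigmaCompact (M (z '' Iio ξ) ∪ ⋃ η ∈ Iio ξ, M (z '' Iic η)) :=
    (hMσ _).union (isSigmaCompact_biUnion (countable_Iio_omega_one ξ) fun η _ => hMσ _)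
  obtain ⟨y, hyZ, hy⟩ := not_subset.1 fun hsub => hZ <| by
    rwa [subset_antisymm hsub (union_subset (hMZ _) (iUnion₂_subset fun η _ => hMZ _))]
  exact ⟨y, hyZ, fun h => hy (Or.inl h), fun η hη h => hy (Or.inr (mem_biUnion hη h))⟩

theorem isRightSeparated_of_avoid {ι : Type*} [LinearOrder ι] [WellFoundedLT ι] {Z : Set Y}
    {M : Set Y → Set Y} (hM : ∀ E ⊆ Z, IsDiscrete E → ∀ q ∈ closure E ∩ Z, M E ∈ 𝓝[Z] q)
    {z : ι → Y} (hz : ∀ ξ, z ξ ∈ Z ∧ z ξ ∉ M (z '' Iio ξ) ∧ ∀ η < ξ, z ξ ∉ M (z '' Iic η)) :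
    (∀ ξ, z ξ ∉ closure (z '' Iio ξ)) ∧ IsRightSeparated z := by
  have hzZ (s : Set ι) : z '' s ⊆ Z := image_subset_iff.2 fun ξ _ => (hz ξ).1
  -- `hM` only applies to discrete sets, so the induction carries the discreteness of the
  -- segments `z '' Iio ξ` and `z '' Iic ξ` along.
  have key (ξ : ι) : z ξ ∉ closure (z '' Iio ξ) ∧
      ∃ U, IsOpen U ∧ z ξ ∈ U ∧ ∀ ζ, ξ < ζ → z ζ ∉ U := by
    induction ξ using WellFoundedLT.induction with | _ ξ ih => ?_
    have hIio : IsDiscrete (z '' Iio ξ) := isDiscrete_image_of_separated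
      (fun η hη => (ih η hη).1) fun η hη =>
        (ih η hη).2.imp fun U ⟨hUo, hηU, hU⟩ => ⟨hUo, hηU, fun ζ _ => hU ζ⟩
    have hleft : z ξ ∉ closure (z '' Iio ξ) := fun h =>
      (hz ξ).2.1 (mem_of_mem_nhdsWithin (hz ξ).1 (hM _ (hzZ _) hIio _ ⟨h, (hz ξ).1⟩))
    have hIic : IsDiscrete (z '' Iic ξ) := by
      refine isDiscrete_image_of_separated (fun η hη => ?_) fun η hη => ?_
      · rcases (mem_Iic.1 hη).lt_or_eq with h | rfl
        exacts [(ih η h).1, hleft]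
      · rcases (mem_Iic.1 hη).lt_or_eq with h | rfl
        · exact (ih η h).2.imp fun U ⟨hUo, hηU, hU⟩ => ⟨hUo, hηU, fun ζ _ => hU ζ⟩
        · exact ⟨univ, isOpen_univ, mem_univ _, fun ζ hζ h => absurd hζ (not_le.2 h)⟩
    obtain ⟨U, hUo, hξU, hUM⟩ := mem_nhdsWithin.1
      (hM _ (hzZ _) hIic (z ξ) ⟨subset_closure ⟨ξ, self_mem_Iic, rfl⟩, (hz ξ).1⟩)
    exact ⟨hleft, U, hUo, hξU, fun ζ hζ hζU => (hz ζ).2.2 ξ hζ (hUM ⟨hζU, (hz ζ).1⟩)⟩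
  choose hleft U hU using key
  exact ⟨hleft, U, hU⟩

/-- A transfinite construction: pick points `z ξ` of `Z`, each outside σ-compact
`Z`-neighbourhoods of the closures of `{z η | η < ξ}` and of `{z ζ | ζ ≤ η}` for `η < ξ`.
The range of `z` is discrete, and by countable tightness each point of its closure already lies in
the closure of some `{z ζ | ζ ≤ η}`, so has a neighbourhood containing only countably many `z ζ`;
this contradicts σ-compactness of the closure. -/
theorem isSigmaCompact_of_forall_isDiscrete {Z : Set Y}
    (htight : ∀ s ⊆ Z, ∀ q ∈ closure s ∩ Z, ∃ t ⊆ s, t.Countable ∧ q ∈ closure t)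
    (hnhds : ∀ A ⊆ Z, IsSigmaCompact A → ∃ M ⊆ Z, IsSigmaCompact M ∧ ∀ q ∈ A, M ∈ 𝓝[Z] q)
    (hdisc : ∀ E ⊆ Z, IsDiscrete E → IsSigmaCompact (closure E ∩ Z)) : IsSigmaCompact Z := by
  by_contra hZ
  have hM (E : Set Y) : ∃ M ⊆ Z, IsSigmaCompact M ∧
      (E ⊆ Z → IsDiscrete E → ∀ q ∈ closure E ∩ Z, M ∈ 𝓝[Z] q) := by
    by_cases hE : E ⊆ Z ∧ IsDiscrete E
    · obtain ⟨M, hMZ, hM, hMq⟩ := hnhds _ inter_subset_right (hdisc E hE.1 hE.2)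
      exact ⟨M, hMZ, hM, fun _ _ => hMq⟩
    · exact ⟨∅, empty_subset _, isSigmaCompact_empty, fun h1 h2 => absurd ⟨h1, h2⟩ hE⟩
  choose M hMZ hMσ hMnhds using hM
  obtain ⟨z, hz⟩ := exists_avoiding_seq_of_not_isSigmaCompact hZ hMZ hMσ
  obtain ⟨hleft, U, hU⟩ := isRightSeparated_of_avoid hMnhds hz
  have hzZ : range z ⊆ Z := range_subset_iff.2 fun ξ => (hz ξ).1
  have hdiscr (s : Set _) : IsDiscrete (z '' s) := isDiscrete_image_of_separated
    (fun ξ _ => hleft ξ) fun ξ _ => ⟨U ξ, (hU ξ).1, (hU ξ).2.1, fun ζ _ => (hU ξ).2.2 ζ⟩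
  have hinj : Function.Injective z := .of_lt_imp_ne fun ξ ζ h hzξ =>
    hleft ζ (hzξ ▸ subset_closure (mem_image_of_mem z (mem_Iio.2 h)))
  have hloc (q) (hq : q ∈ closure (range z) ∩ Z) :
      ∃ N ∈ 𝓝[closure (range z) ∩ Z] q, (z ⁻¹' N).Countable := by
    obtain ⟨t, htz, htc, hqt⟩ := htight _ hzZ q hq
    obtain ⟨ξ₀, hξ₀⟩ := exists_gt_of_countable_omega_one (htc.preimage hinj)
    have ht : t ⊆ z '' Iic ξ₀ := fun y hy => by
      obtain ⟨ξ, rfl⟩ := htz hy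
      exact ⟨ξ, (hξ₀ ξ hy).le, rfl⟩
    refine ⟨M (z '' Iic ξ₀), nhdsWithin_mono q inter_subset_right
      (hMnhds _ (image_subset_iff.2 fun ξ _ => (hz ξ).1) (hdiscr _) q ⟨closure_mono ht hqt, hq.2⟩),
      (countable_Iic_omega_one ξ₀).mono fun ξ hξ => not_lt.1 fun h => (hz ξ).2.2 ξ₀ h hξ⟩
  have hE : IsDiscrete (range z) := image_univ ▸ hdiscr univ
  have hcount : (z ⁻¹' (closure (range z) ∩ Z)).Countable :=
    (hdisc _ hzZ hE).countable_preimage_of_forall_nhdsWithin hloc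
  have huniv : Set.univ ⊆ z ⁻¹' (closure (range z) ∩ Z) :=
    fun ξ _ => ⟨subset_closure (mem_range_self ξ), (hz ξ).1⟩
  exact not_countable_univ_omega_one (hcount.mono huniv)

end SigmaCompactness

section Codiag

theorem DiscretelySigmaCompact.isSigmaCompact_closure_inter {Y : Type u} [TopologicalSpace Y]
    {O : Set Y} (h : DiscretelySigmaCompact O) {E : Set Y} (hEO : E ⊆ O) (hE : IsDiscrete E) :
    IsSigmaCompact (closure E ∩ O) := by
  have hD : IsDiscrete ((↑) ⁻¹' E : Set O) :=
    hE.preimage continuous_subtype_val.continuousOn Subtype.val_injective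
  have := (h _ (isDiscrete_iff_discreteTopology.1 hD)).image continuous_subtype_val
  rwa [IsInducing.subtypeVal.closure_eq_preimage_closure_image, Subtype.image_preimage_coe,
    Subtype.image_preimage_coe, inter_eq_right.2 hEO, inter_comm] at this

variable {X : Type u} [TopologicalSpace X] [T2Space X]

theorem isOpen_codiag : IsOpen (codiag X) :=
  isClosed_diagonal.isOpen_compl

theorem closure_prod_inter_codiag (s : Set X) :
    closure ((s ×ˢ s) ∩ codiag X) ∩ codiag X = (closure s ×ˢ closure s) ∩ codiag X := by
  refine subset_antisymm (inter_subset_inter_left _ ?_) ?_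
  · exact (closure_mono inter_subset_left).trans closure_prod_eq.subset
  rintro ⟨u, v⟩ ⟨⟨hu, hv⟩, huv⟩
  obtain ⟨P, Q, hPo, hQo, huP, hvQ, hPQ⟩ := t2_separation huv
  have hsub : (P ∩ s) ×ˢ (Q ∩ s) ⊆ (s ×ˢ s) ∩ codiag X := fun p hp =>
    ⟨⟨hp.1.2, hp.2.2⟩, disjoint_left.1 hPQ hp.1.1 ∘ fun h => h ▸ hp.2.1⟩
  refine ⟨closure_mono hsub ?_, huv⟩
  rw [closure_prod_eq]
  exact ⟨hPo.inter_closure ⟨huP, hu⟩, hQo.inter_closure ⟨hvQ, hv⟩⟩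

theorem DiscretelySigmaCompact.isSigmaCompact_closure_prod_inter_codiag
    (h : DiscretelySigmaCompact (codiag X)) {D : Set X} (hD : IsDiscrete D) :
    IsSigmaCompact ((closure D ×ˢ closure D) ∩ codiag X) := by
  rw [← closure_prod_inter_codiag]
  exact h.isSigmaCompact_closure_inter inter_subset_right ((hD.prod hD).mono inter_subset_left)

theorem IsCompact.secondCountableTopology_of_isSigmaCompact_prod_inter_codiag {C : Set X}
    (hC : IsCompact C) (h : IsSigmaCompact ((C ×ˢ C) ∩ codiag X)) : SecondCountableTopology C := by
  have : CompactSpace C := isCompact_iff_compactSpace.1 hC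
  apply secondCountableTopology_of_isGδ_diagonal
  let f : C × C → X × X := Prod.map (↑) (↑)
  have hf : IsInducing f := IsInducing.subtypeVal.prodMap IsInducing.subtypeVal
  have hdiag : (diagonal C)ᶜ = f ⁻¹' ((C ×ˢ C) ∩ codiag X) := by
    ext ⟨a, b⟩
    simp [f, codiag, Subtype.ext_iff]
  rw [← compl_compl (diagonal C), hdiag]
  refine IsSigmaCompact.isGδ_compl (hf.isSigmaCompact_iff.2 ?_)
  rwa [image_preimage_eq_of_subset]
  rintro ⟨a, b⟩ ⟨⟨ha, hb⟩, -⟩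
  exact ⟨(⟨a, ha⟩, ⟨b, hb⟩), rfl⟩

theorem IsCompact.isHereditarilyLindelof (h : DiscretelySigmaCompact (codiag X)) {C : Set X}
    (hC : IsCompact C) : IsHereditarilyLindelof C := by
  intro t htC
  refine isLindelof_of_forall_isDiscrete fun D hDt hD => ?_
  have hD' : IsCompact (closure D) :=
    hC.of_isClosed_subset isClosed_closure (closure_minimal (hDt.trans htC) hC.isClosed)
  have := hD'.secondCountableTopology_of_isSigmaCompact_prod_inter_codiag
    (h.isSigmaCompact_closure_prod_inter_codiag hD)
  exact fun s hs => isHereditarilyLindelof_iff_hereditarilyLindelofSpace.2 inferInstance s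
    (hs.trans inter_subset_left)

theorem IsCompact.isSigmaCompact_prod_inter_codiag (h : DiscretelySigmaCompact (codiag X))
    {T : Set X} (hT : IsCompact T) : IsSigmaCompact ((T ×ˢ T) ∩ codiag X) := by
  have : CompactSpace T := isCompact_iff_compactSpace.1 hT
  have : HereditarilyLindelofSpace T :=
    isHereditarilyLindelof_iff_hereditarilyLindelofSpace.1 (hT.isHereditarilyLindelof h)
  have : FirstCountableTopology T := firstCountableTopology_of_hereditarilyLindelofSpace
  have : FirstCountableTopology (T ×ˢ T) :=
    (Homeomorph.Set.prod T T).isEmbedding.isInducing.firstCountableTopology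
  refine isSigmaCompact_of_forall_isDiscrete
    (fun s hs q hq =>
      exists_countable_subset_mem_closure (hs.trans inter_subset_left) ⟨hq.1, hq.2.1⟩)
    (fun A hA hAσ => hAσ.exists_isSigmaCompact_nhdsWithin (hT.prod hT) isOpen_codiag hA)
    fun E hE hEd => ?_
  have hcl : closure E ⊆ T ×ˢ T :=
    closure_minimal (hE.trans inter_subset_left) (hT.prod hT).isClosed
  rw [← inter_assoc, inter_eq_left.2 hcl]
  exact h.isSigmaCompact_closure_inter (hE.trans inter_subset_right) hEd

theorem IsCompact.isHereditarilyLindelof_prod (h : DiscretelySigmaCompact (codiag X))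
    {T : Set X} (hT : IsCompact T) : IsHereditarilyLindelof (T ×ˢ T) := by
  have := hT.secondCountableTopology_of_isSigmaCompact_prod_inter_codiag
    (hT.isSigmaCompact_prod_inter_codiag h)
  have : SecondCountableTopology (T ×ˢ T) :=
    (Homeomorph.Set.prod T T).isEmbedding.isInducing.secondCountableTopology
  exact isHereditarilyLindelof_iff_hereditarilyLindelofSpace.2 inferInstance

theorem isHereditarilyLindelof_codiag (h : DiscretelySigmaCompact (codiag X)) :
    IsHereditarilyLindelof (codiag X) := by
  intro t ht
  refine isLindelof_of_forall_isDiscrete fun D hDt hD => ?_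
  obtain ⟨K, hK, hKD⟩ := h.isSigmaCompact_closure_inter (hDt.trans ht) hD
  intro s hs
  have hsK : s = ⋃ n, s ∩ K n := by
    rw [← inter_iUnion, hKD, inter_eq_left.2 (hs.trans (inter_subset_inter_right _ ht))]
  rw [hsK]
  refine isLindelof_iUnion fun n => ?_
  let T := Prod.fst '' K n ∪ Prod.snd '' K n
  have hT : IsCompact T := ((hK n).image continuous_fst).union ((hK n).image continuous_snd)
  exact hT.isHereditarilyLindelof_prod h _ fun p hp =>
    ⟨subset_union_left (mem_image_of_mem _ hp.2), subset_union_right (mem_image_of_mem _ hp.2)⟩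

end Codiag

theorem hereditarilyLindelofSpace_of_isHereditarilyLindelof_codiag {X : Type u}
    [TopologicalSpace X] (h : IsHereditarilyLindelof (codiag X)) : HereditarilyLindelofSpace X := by
  refine ⟨fun t _ => ?_⟩
  rcases t.eq_empty_or_nonempty with rfl | ⟨a, -⟩
  · exact isLindelof_empty
  have hslice : (fun x => (x, a)) '' (t \ {a}) ⊆ codiag X := by
    rintro _ ⟨x, hx, rfl⟩
    exact hx.2
  rw [← sdiff_union_inter t {a}, ← image_id' (t \ {a}), ← image_image Prod.fst (fun x => (x, a))]
  exact ((h _ hslice).image continuous_fst).union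
    ((subsingleton_singleton.anti inter_subset_right).isLindelof)

theorem hereditarilyLindelofSpace_prod_of_isHereditarilyLindelof_codiag {X : Type u}
    [TopologicalSpace X] (h : IsHereditarilyLindelof (codiag X)) :
    HereditarilyLindelofSpace (X × X) := by
  have := hereditarilyLindelofSpace_of_isHereditarilyLindelof_codiag h
  refine ⟨fun t _ => ?_⟩
  have ht : t = (t ∩ codiag X) ∪ (fun x => (x, x)) '' {x | (x, x) ∈ t} := by
    ext ⟨x, y⟩
    refine ⟨fun hxy => ?_, ?_⟩
    · by_cases hne : x = y
      · subst hne
        exact Or.inr ⟨x, hxy, rfl⟩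
      · exact Or.inl ⟨hxy, hne⟩
    · rintro (hxy | ⟨z, hz, hzxy⟩)
      exacts [hxy.1, hzxy ▸ hz]
  rw [ht]
  exact (h _ inter_subset_right).union
    ((HereditarilyLindelofSpace.isLindelof _).image (continuous_id.prodMk continuous_id))

/-- If `X` is Tychonoff and its co-diagonal is discretely σ-compact, then
`X × X` is hereditarily Lindelöf. -/
theorem codiag_discretelySigmaCompact_hereditarilyLindelof
    (X : Type u) [TopologicalSpace X] [T1Space X] [CompletelyRegularSpace X]
    (h : DiscretelySigmaCompact ↥(codiag X)) :
    HereditarilyLindelofSpace (X × X) :=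
  hereditarilyLindelofSpace_prod_of_isHereditarilyLindelof_codiag (isHereditarilyLindelof_codiag h)
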